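/- (Prime integrals in terms of the radial deformation, Lemma 2.1.) One has: (i) (1/(2i))·∫₀^{2π} conj(w(θ))·∂_θw(θ) dθ = π + ∫₀^{2π} ξ(θ) dθ; (ii) (1/(2i))·∫₀^{2π} |w(θ)|²·∂_θw(θ) dθ = (1/3)·∫₀^{2π} (1+2ξ(θ))^{3/2}·w₀(θ) dθ; (iii) (1/(4i))·∫₀^{2π} |w(θ)|²·conj(w(θ))·∂_θw(θ) dθ = (1/4)·∫₀^{2π} (1+2ξ(θ))²·g_γ(θ) dθ. -/

import Mathlib

open Real MeasureTheory

/-- `g_γ(θ) := γ cos²θ + γ⁻¹ sin²θ`. -/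
noncomputable def gell (γ θ : ℝ) : ℝ := γ * Real.cos θ ^ 2 + γ⁻¹ * Real.sin θ ^ 2

/-- `w₀(θ) := √γ cos θ + i γ^{−1/2} sin θ`. -/
noncomputable def w0 (γ θ : ℝ) : ℂ :=
  (Real.sqrt γ * Real.cos θ : ℝ) + Complex.I * ((Real.sin θ / Real.sqrt γ : ℝ) : ℂ)

/-- `w(θ) := (1+2ξ(θ))^{1/2} w₀(θ)`. -/
noncomputable def wlift (γ : ℝ) (ξ : ℝ → ℝ) (θ : ℝ) : ℂ :=
  (Real.sqrt (1 + 2 * ξ θ) : ℂ) * w0 γ θ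

/-!
For a closed `C¹` curve `w`, `Re (w̄ w') = (|w|²)' / 2`, so the real part of `|w|^(2n) w̄ w'` is the
exact derivative `(|w|^(2n+2))' / (2n+2)` and only `i |w|^(2n) Im (w̄ w')` survives integration.
Likewise `|w|² w' = w (w̄ w')` gives `|w|² w' = (|w|² w)' / 3 + (2i/3) Im (w̄ w') w`.
For `w = (1+2ξ)^{1/2} w₀` the radial factor is real, so `Im (w̄ w') = (1+2ξ) Im (w̄₀ w₀') = 1+2ξ`
(the ellipse `w₀` has constant areal velocity), and `|w|² = (1+2ξ) g_γ`.
-/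

open Complex ComplexConjugate

theorem HasDerivAt.normSq {w : ℝ → ℂ} {w' : ℂ} {t : ℝ} (hw : HasDerivAt w w' t) :
    HasDerivAt (fun s => normSq (w s)) (2 * (conj (w t) * w').re) t := by
  simpa only [← normSq_eq_norm_sq, Complex.inner, mul_comm w'] using hw.norm_sq

section

variable {a b : ℝ}

theorem integral_eq_zero_of_hasDerivAt_of_eq {E : Type*} [NormedAddCommGroup E] [NormedSpace ℝ E]
    [CompleteSpace E] {F F' : ℝ → E} (hF : ∀ t, HasDerivAt F (F' t) t)
    (hF' : IntervalIntegrable F' volume a b) (hab : F a = F b) :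
    ∫ t in a..b, F' t = 0 := by
  rw [intervalIntegral.integral_eq_sub_of_hasDerivAt (fun t _ => hF t) hF', hab, sub_self]

theorem intervalIntegral_eq_I_mul_integral_im {f : ℝ → ℂ}
    (hf : IntervalIntegrable f volume a b) (hre : ∫ t in a..b, (f t).re = 0) :
    ∫ t in a..b, f t = I * ∫ t in a..b, (f t).im := by
  have h_re : ∫ t in a..b, (f t).re = (∫ t in a..b, f t).re :=
    intervalIntegral.intervalIntegral_re hf
  have h_im : ∫ t in a..b, (f t).im = (∫ t in a..b, f t).im :=
    intervalIntegral.intervalIntegral_im hf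
  apply Complex.ext <;> simp [← h_re, ← h_im, hre]

end

section ClosedCurve

variable {w : ℝ → ℂ} {a b : ℝ} (hw : ContDiff ℝ 1 w) (hab : w a = w b)
include hw hab

theorem integral_normSq_pow_mul_conj_mul_deriv (n : ℕ) :
    ∫ t in a..b, ((normSq (w t) ^ n : ℝ) : ℂ) * conj (w t) * deriv w t
      = I * ∫ t in a..b, normSq (w t) ^ n * (conj (w t) * deriv w t).im := by
  have hd (t : ℝ) : HasDerivAt w (deriv w t) t :=
    (hw.differentiable one_ne_zero t).hasDerivAt
  have hcont : Continuous fun t => ((normSq (w t) ^ n : ℝ) : ℂ) * conj (w t) * deriv w t := by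
    have := hw.continuous; have := hw.continuous_deriv le_rfl; fun_prop
  rw [intervalIntegral_eq_I_mul_integral_im (hcont.intervalIntegrable a b)]
  · simp only [mul_assoc, im_ofReal_mul]
  · refine integral_eq_zero_of_hasDerivAt_of_eq
      (F := fun t => normSq (w t) ^ (n + 1) / (2 * (n + 1))) (fun t => ?_)
      ((continuous_re.comp hcont).intervalIntegrable a b) (by simp only [hab])
    refine (((hd t).normSq.fun_pow (n + 1)).div_const (2 * (n + 1))).congr_deriv ?_
    rw [mul_assoc (_ : ℂ), re_ofReal_mul, Nat.add_sub_cancel]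
    push_cast
    field_simp

theorem integral_normSq_mul_deriv :
    ∫ t in a..b, (normSq (w t) : ℂ) * deriv w t
      = 2 * I / 3 * ∫ t in a..b, ((conj (w t) * deriv w t).im : ℂ) * w t := by
  have hd (t : ℝ) : HasDerivAt w (deriv w t) t :=
    (hw.differentiable one_ne_zero t).hasDerivAt
  have hw₀ := hw.continuous
  have hw₁ := hw.continuous_deriv le_rfl
  set F' : ℝ → ℂ := fun t =>
    2 * ((conj (w t) * deriv w t).re : ℂ) * w t + normSq (w t) * deriv w t
  have hF (t : ℝ) : HasDerivAt (fun s => (normSq (w s) : ℂ) * w s) (F' t) t := by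
    refine ((hd t).normSq.ofReal_comp.mul (hd t)).congr_deriv ?_
    push_cast
    ring
  have hsplit (t : ℝ) : (normSq (w t) : ℂ) * deriv w t
      = F' t / 3 + 2 * I / 3 * (((conj (w t) * deriv w t).im : ℂ) * w t) := by
    have h_normSq := mul_conj (w t)
    have h_re_im := re_add_im (conj (w t) * deriv w t)
    simp only [F']
    linear_combination (-(2 / 3) * deriv w t) * h_normSq - (2 / 3) * w t * h_re_im
  have hF'_cont : Continuous F' := by fun_prop
  rw [intervalIntegral.integral_congr fun t _ => hsplit t,
    intervalIntegral.integral_add ((hF'_cont.div_const 3).intervalIntegrable a b)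
      ((by fun_prop : Continuous _).intervalIntegrable a b),
    intervalIntegral.integral_div,
    integral_eq_zero_of_hasDerivAt_of_eq hF (hF'_cont.intervalIntegrable a b) (by simp only [hab]),
    zero_div, zero_add, intervalIntegral.integral_const_mul]

end ClosedCurve

theorem im_conj_ofReal_mul_deriv_ofReal_mul {r : ℝ → ℝ} {z : ℝ → ℂ} {t : ℝ}
    (hr : DifferentiableAt ℝ r t) (hz : DifferentiableAt ℝ z t) :
    (conj ((r t : ℂ) * z t) * deriv (fun s => (r s : ℂ) * z s) t).im
      = r t ^ 2 * (conj (z t) * deriv z t).im := by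
  have hd : deriv (fun s => (r s : ℂ) * z s) t
      = ((deriv r t : ℝ) : ℂ) * z t + r t * deriv z t :=
    (hr.hasDerivAt.ofReal_comp.fun_mul hz.hasDerivAt).deriv
  have h_normSq := mul_conj (z t)
  rw [hd, map_mul, conj_ofReal,
    show (r t : ℂ) * conj (z t) * (((deriv r t : ℝ) : ℂ) * z t + r t * deriv z t)
      = ((r t * deriv r t * normSq (z t) : ℝ) : ℂ)
        + ((r t ^ 2 : ℝ) : ℂ) * (conj (z t) * deriv z t) by
        push_cast; linear_combination (r t : ℂ) * ((deriv r t : ℝ) : ℂ) * h_normSq]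
  simp only [add_im, ofReal_im, im_ofReal_mul, zero_add]

theorem hasDerivAt_w0 (γ θ : ℝ) :
    HasDerivAt (w0 γ) ((-(√γ * Real.sin θ) : ℝ) + I * ((Real.cos θ / √γ : ℝ) : ℂ)) θ := by
  have h_re : HasDerivAt (fun θ => √γ * Real.cos θ) (-(√γ * Real.sin θ)) θ := by
    simpa using (Real.hasDerivAt_cos θ).const_mul √γ
  exact h_re.ofReal_comp.add (((Real.hasDerivAt_sin θ).div_const √γ).ofReal_comp.const_mul I)

theorem contDiff_w0 (γ : ℝ) : ContDiff ℝ 1 (w0 γ) := by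
  unfold w0
  exact (ofRealCLM.contDiff.comp (contDiff_const.mul contDiff_cos)).add
    (contDiff_const.mul (ofRealCLM.contDiff.comp (contDiff_sin.div_const _)))

theorem normSq_w0 {γ : ℝ} (hγ : 0 ≤ γ) (θ : ℝ) : normSq (w0 γ θ) = gell γ θ := by
  rw [w0, mul_comm I, normSq_add_mul_I, gell, div_pow, mul_pow, sq_sqrt hγ]
  ring

theorem im_conj_w0_mul_deriv {γ : ℝ} (hγ : 0 < γ) (θ : ℝ) :
    (conj (w0 γ θ) * deriv (w0 γ) θ).im = 1 := by
  have hsqrt : √γ ≠ 0 := (sqrt_pos.2 hγ).ne'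
  rw [(hasDerivAt_w0 γ θ).deriv, w0]
  simp only [map_add, map_mul, conj_ofReal, conj_I, mul_im, mul_re, add_re, add_im, ofReal_re,
    ofReal_im, I_re, I_im, neg_re, neg_im]
  field_simp
  linear_combination √γ ^ 2 * Real.sin_sq_add_cos_sq θ

section RadialDeformation

variable {γ : ℝ} {ξ : ℝ → ℝ}

theorem contDiff_wlift (hξ : ContDiff ℝ 1 ξ) (hpos : ∀ θ, 0 < 1 + 2 * ξ θ) :
    ContDiff ℝ 1 (wlift γ ξ) :=
  (ofRealCLM.contDiff.comp ((contDiff_const.add (contDiff_const.mul hξ)).sqrt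
    fun θ => (hpos θ).ne')).mul (contDiff_w0 γ)

theorem normSq_wlift (hγ : 0 ≤ γ) {θ : ℝ} (hθ : 0 ≤ 1 + 2 * ξ θ) :
    normSq (wlift γ ξ θ) = (1 + 2 * ξ θ) * gell γ θ := by
  rw [wlift, normSq_mul, normSq_ofReal, mul_self_sqrt hθ, normSq_w0 hγ]

theorem im_conj_wlift_mul_deriv (hγ : 0 < γ) (hξ : ContDiff ℝ 1 ξ)
    (hpos : ∀ θ, 0 < 1 + 2 * ξ θ) (θ : ℝ) :
    (conj (wlift γ ξ θ) * deriv (wlift γ ξ) θ).im = 1 + 2 * ξ θ := by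
  have hsqrt : ContDiff ℝ 1 fun θ => √(1 + 2 * ξ θ) :=
    (contDiff_const.add (contDiff_const.mul hξ)).sqrt fun θ => (hpos θ).ne'
  rw [show wlift γ ξ = fun s => (√(1 + 2 * ξ s) : ℂ) * w0 γ s from rfl,
    im_conj_ofReal_mul_deriv_ofReal_mul (hsqrt.differentiable one_ne_zero θ)
      ((contDiff_w0 γ).differentiable one_ne_zero θ),
    im_conj_w0_mul_deriv hγ, sq_sqrt (hpos θ).le, mul_one]

theorem wlift_zero_eq_two_pi (hper : ∀ θ, ξ (θ + 2 * π) = ξ θ) :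
    wlift γ ξ 0 = wlift γ ξ (2 * π) := by
  have hξ : ξ (2 * π) = ξ 0 := by simpa using hper 0
  simp [wlift, w0, hξ]

end RadialDeformation

/-- Prime integrals in terms of the radial deformation (Lemma 2.1). -/
theorem prime_integrals
    (γ : ℝ) (hγ : 1 ≤ γ)
    (ξ : ℝ → ℝ) (hξ : ContDiff ℝ 1 ξ)
    (hper : ∀ θ, ξ (θ + 2 * π) = ξ θ)
    (hpos : ∀ θ, 0 < 1 + 2 * ξ θ) :
    -- (i)
    (1 / (2 * Complex.I)) *
        (∫ θ in (0:ℝ)..(2 * π), (starRingEnd ℂ) (wlift γ ξ θ) * deriv (wlift γ ξ) θ)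
      = Complex.ofReal (π + ∫ θ in (0:ℝ)..(2 * π), ξ θ) ∧
    -- (ii)
    (1 / (2 * Complex.I)) *
        (∫ θ in (0:ℝ)..(2 * π),
          ((Complex.normSq (wlift γ ξ θ) : ℝ) : ℂ) * deriv (wlift γ ξ) θ)
      = (1 / 3 : ℂ) *
        (∫ θ in (0:ℝ)..(2 * π), (((1 + 2 * ξ θ) ^ ((3:ℝ)/2) : ℝ) : ℂ) * w0 γ θ) ∧
    -- (iii)
    (1 / (4 * Complex.I)) *
        (∫ θ in (0:ℝ)..(2 * π),
          ((Complex.normSq (wlift γ ξ θ) : ℝ) : ℂ) *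
            (starRingEnd ℂ) (wlift γ ξ θ) * deriv (wlift γ ξ) θ)
      = Complex.ofReal ((1 / 4) * ∫ θ in (0:ℝ)..(2 * π), (1 + 2 * ξ θ) ^ 2 * gell γ θ) := by
  have hγ₀ : 0 < γ := zero_lt_one.trans_le hγ
  have hw := contDiff_wlift (γ := γ) hξ hpos
  have hclosed := wlift_zero_eq_two_pi (γ := γ) hper
  have him := im_conj_wlift_mul_deriv hγ₀ hξ hpos
  have hnormSq (θ : ℝ) := normSq_wlift (ξ := ξ) hγ₀.le (hpos θ).le
  have hξ_int : IntervalIntegrable ξ volume 0 (2 * π) := hξ.continuous.intervalIntegrable _ _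
  refine ⟨?_, ?_, ?_⟩
  · have h := integral_normSq_pow_mul_conj_mul_deriv hw hclosed 0
    simp only [pow_zero, one_mul, ofReal_one] at h
    rw [h, intervalIntegral.integral_congr fun θ _ => him θ,
      intervalIntegral.integral_add intervalIntegrable_const (hξ_int.const_mul 2),
      intervalIntegral.integral_const_mul, intervalIntegral.integral_const, smul_eq_mul, mul_one,
      sub_zero]
    push_cast
    field_simp
  · have hpt (θ : ℝ) :
        ((conj (wlift γ ξ θ) * deriv (wlift γ ξ) θ).im : ℂ) * wlift γ ξ θ
          = (((1 + 2 * ξ θ) ^ ((3:ℝ)/2) : ℝ) : ℂ) * w0 γ θ := by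
      rw [him, wlift, show (3:ℝ)/2 = 1 + 1/2 by norm_num, rpow_add (hpos θ), rpow_one,
        ← sqrt_eq_rpow]
      push_cast
      ring
    rw [integral_normSq_mul_deriv hw hclosed, intervalIntegral.integral_congr fun θ _ => hpt θ]
    field_simp
  · have h := integral_normSq_pow_mul_conj_mul_deriv hw hclosed 1
    simp only [pow_one] at h
    rw [h, intervalIntegral.integral_congr fun θ _ =>
      show _ = (1 + 2 * ξ θ) ^ 2 * gell γ θ by rw [hnormSq, him]; ring]
    push_cast
    field_simp
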